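/- Let p^{(α)} be a symmetric kernel on ℝ₊ satisfying the 3G inequality p^{(α)}(t,r,z) p^{(α)}(τ,z,s) ≤ C p^{(α)}(t+τ,r,s) [p^{(α)}(t,r,z) + p^{(α)}(τ,z,s)], and define p_ζ^{(α)}(t,r,s) so that p_ζ^{(α)}(t,r,s) is comparable to p^{(α)}(t,r,s)(t^{1/α}+r+s)^{-2ζ} with comparability constant c ≥ 1. Then there is a constant C' such that for all t, τ, r, s, z > 0, p_ζ^{(α)}(t,r,z) p_ζ^{(α)}(τ,z,s) / p^{(α)}(t+τ,r,s) ≤ C' [ p_ζ^{(α)}(t,r,z)(τ^{1/α}+z+s)^{-2ζ} + p_ζ^{(α)}(τ,z,s)(t^{1/α}+z+r)^{-2ζ} ]. -/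
import Mathlib


open Real

theorem threeG_inequality (α ζ : ℝ) (hα0 : 0 < α) (hα2 : α < 2) (hζ : -1/2 < ζ)
    (p pz : ℝ → ℝ → ℝ → ℝ)
    (hpnn : ∀ t r s, 0 < t → 0 < r → 0 < s → 0 ≤ p t r s)
    (hsym : ∀ t r s, p t r s = p t s r)
    (C : ℝ) (hC : 0 < C)
    (h3G : ∀ t τ r s z, 0 < t → 0 < τ → 0 < r → 0 < s → 0 < z →
      p t r z * p τ z s ≤ C * p (t+τ) r s * (p t r z + p τ z s))
    (c : ℝ) (hc : 1 ≤ c)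
    (hcomp : ∀ t r s, 0 < t → 0 < r → 0 < s →
      c⁻¹ * (p t r s * (t^(1/α) + r + s)^(-(2*ζ))) ≤ pz t r s ∧
      pz t r s ≤ c * (p t r s * (t^(1/α) + r + s)^(-(2*ζ)))) :
    ∃ C' : ℝ, 0 < C' ∧ ∀ t τ r s z, 0 < t → 0 < τ → 0 < r → 0 < s → 0 < z →
      pz t r z * pz τ z s / p (t+τ) r s ≤
        C' * (pz t r z * (τ^(1/α) + z + s)^(-(2*ζ)) +
              pz τ z s * (t^(1/α) + z + r)^(-(2*ζ))) := by
  have hc0 : (0:ℝ) < c := lt_of_lt_of_le one_pos hc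
  refine ⟨C * c^3, by positivity, ?_⟩
  intro t τ r s z ht hτ hr hs hz
  obtain ⟨h1l, h1u⟩ := hcomp t r z ht hr hz
  obtain ⟨h2l, h2u⟩ := hcomp τ z s hτ hz hs
  set U : ℝ := (t^(1/α) + r + z)^(-(2*ζ)) with hU
  set V : ℝ := (τ^(1/α) + z + s)^(-(2*ζ)) with hV
  have hbase1 : (0:ℝ) < t^(1/α) + r + z := by positivity
  have hbase2 : (0:ℝ) < τ^(1/α) + z + s := by positivity
  have hUpos : 0 < U := rpow_pos_of_pos hbase1 _
  have hVpos : 0 < V := rpow_pos_of_pos hbase2 _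
  have hrw : (t^(1/α) + z + r)^(-(2*ζ)) = U := by
    rw [hU, show t^(1/α) + z + r = t^(1/α) + r + z from by ring]
  rw [hrw]
  have hA0 : 0 ≤ p t r z := hpnn t r z ht hr hz
  have hB0 : 0 ≤ p τ z s := hpnn τ z s hτ hz hs
  have hP0 : 0 ≤ p (t+τ) r s := hpnn (t+τ) r s (by linarith) hr hs
  have hpz1 : 0 ≤ pz t r z :=
    le_trans (mul_nonneg (inv_nonneg.2 hc0.le) (mul_nonneg hA0 hUpos.le)) h1l
  have hpz2 : 0 ≤ pz τ z s :=
    le_trans (mul_nonneg (inv_nonneg.2 hc0.le) (mul_nonneg hB0 hVpos.le)) h2l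
  rcases eq_or_lt_of_le hP0 with hP | hP
  · rw [← hP, div_zero]
    exact mul_nonneg (by positivity)
      (add_nonneg (mul_nonneg hpz1 hVpos.le) (mul_nonneg hpz2 hUpos.le))
  · rw [div_le_iff₀ hP]
    have h3 := h3G t τ r s z ht hτ hr hs hz
    have s1 : pz t r z * pz τ z s ≤ (c * (p t r z * U)) * (c * (p τ z s * V)) :=
      mul_le_mul h1u h2u hpz2 (mul_nonneg hc0.le (mul_nonneg hA0 hUpos.le))
    have s3 : c^2 * (U*V) * (p t r z * p τ z s)
        ≤ c^2 * (U*V) * (C * p (t+τ) r s * (p t r z + p τ z s)) :=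
      mul_le_mul_of_nonneg_left h3 (by positivity)
    have s5 : p t r z * U ≤ c * pz t r z := by
      have h := mul_le_mul_of_nonneg_left h1l hc0.le
      calc p t r z * U = c * (c⁻¹ * (p t r z * U)) := by field_simp
        _ ≤ c * pz t r z := h
    have s6 : p τ z s * V ≤ c * pz τ z s := by
      have h := mul_le_mul_of_nonneg_left h2l hc0.le
      calc p τ z s * V = c * (c⁻¹ * (p τ z s * V)) := by field_simp
        _ ≤ c * pz τ z s := h
    have s7 : C * c^2 * p (t+τ) r s * ((p t r z * U) * V + (p τ z s * V) * U)
        ≤ C * c^2 * p (t+τ) r s * ((c * pz t r z) * V + (c * pz τ z s) * U) := by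
      apply mul_le_mul_of_nonneg_left _ (by positivity)
      exact add_le_add (mul_le_mul_of_nonneg_right s5 hVpos.le)
        (mul_le_mul_of_nonneg_right s6 hUpos.le)
    calc pz t r z * pz τ z s
        ≤ (c * (p t r z * U)) * (c * (p τ z s * V)) := s1
      _ = c^2 * (U*V) * (p t r z * p τ z s) := by ring
      _ ≤ c^2 * (U*V) * (C * p (t+τ) r s * (p t r z + p τ z s)) := s3
      _ = C * c^2 * p (t+τ) r s * ((p t r z * U) * V + (p τ z s * V) * U) := by ring
      _ ≤ C * c^2 * p (t+τ) r s * ((c * pz t r z) * V + (c * pz τ z s) * U) := s7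
      _ = C * c^3 * (pz t r z * V + pz τ z s * U) * p (t+τ) r s := by ring
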